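/- Characterization of the ideal LOD space: suppose a_β is an inner product on H^1(Ω;ℂ) (e.g. β ≥ 1/2 + ‖A‖²_{L^∞}), let W = ker π_h ∩ H^1 be the kernel of the L²-projection onto the finite-dimensional subspace V_h ⊂ H^1, and define the corrector 𝒞 : H^1 → W by a_β(𝒞v, w) = a_β(v, w) for all w ∈ W. Then the a_β-orthogonal complement of W in H^1 equals (Id − 𝒞)V_h, and it coincides with 𝒜_β^{-1}V_h, where 𝒜_β^{-1}f ∈ H^1 is defined by a_β(𝒜_β^{-1}f, v) = (f,v)_{L²} for all v ∈ H^1. -/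
import Mathlib


noncomputable section

/-- characterization of the ideal LOD space. In an abstract real vector space
`V` (playing the role of `H¹(Ω;ℂ)`) carrying two inner products: `b` (the `L²` inner product)
and `a` (the bilinear form `a_β`, assumed to be an inner product, e.g. `β ≥ 1/2 + ‖A‖²_{L∞}`),
let `V_h` be a finite-dimensional subspace, `π_h` the `b`-orthogonal projection onto `V_h`,
`W = ker π_h` the detail space, and `𝒞` the corrector defined by
`a(𝒞v, w) = a(v, w)` for all `w ∈ W`. Then the `a`-orthogonal complement of `W` equals
`(Id − 𝒞)V_h`, and it coincides with `𝒜_β⁻¹ V_h`, where `z = 𝒜_β⁻¹ f` is characterized by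
`a(z, v) = b(f, v)` for all `v`. -/
theorem statement13
    (V : Type*) [AddCommGroup V] [Module ℝ V]
    (a b : V →ₗ[ℝ] V →ₗ[ℝ] ℝ)
    (ha_symm : ∀ v w : V, a v w = a w v)
    (ha_pos : ∀ v : V, v ≠ 0 → 0 < a v v)
    (hb_symm : ∀ v w : V, b v w = b w v)
    (hb_pos : ∀ v : V, v ≠ 0 → 0 < b v v)
    (Vh : Submodule ℝ V) [FiniteDimensional ℝ Vh]
    (πh : V →ₗ[ℝ] V)
    (hπ_mem : ∀ v : V, πh v ∈ Vh)
    (hπ_id : ∀ v ∈ Vh, πh v = v)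
    (hπ_orth : ∀ v : V, ∀ vh ∈ Vh, b (v - πh v) vh = 0)
    (C : V →ₗ[ℝ] V)
    (hC_mem : ∀ v : V, πh (C v) = 0)
    (hC : ∀ v w : V, πh w = 0 → a (C v) w = a v w) :
    {z : V | ∀ w : V, πh w = 0 → a z w = 0}
        = (fun vh : V => vh - C vh) '' (Vh : Set V)
    ∧ (fun vh : V => vh - C vh) '' (Vh : Set V)
        = {z : V | ∃ f ∈ Vh, ∀ v : V, a z v = b f v} := by

  have ha_zero : ∀ d : V, a d d = 0 → d = 0 := by
    intro d h
    by_contra hd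
    exact (ne_of_gt (ha_pos d hd)) h
  -- First equality
  have h1 : {z : V | ∀ w : V, πh w = 0 → a z w = 0}
      = (fun vh : V => vh - C vh) '' (Vh : Set V) := by
    ext z
    constructor
    · intro hz
      refine ⟨πh z, hπ_mem z, ?_⟩
      have hπd : πh (z - (πh z - C (πh z))) = 0 := by
        simp [map_sub, hπ_id _ (hπ_mem z), hC_mem]
      have e1 : a z (z - (πh z - C (πh z))) = 0 := hz _ hπd
      have e2 : a (πh z - C (πh z)) (z - (πh z - C (πh z))) = 0 := by
        rw [map_sub a (πh z) (C (πh z)), LinearMap.sub_apply, hC (πh z) _ hπd, sub_self]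
      have had : a (z - (πh z - C (πh z))) (z - (πh z - C (πh z))) = 0 := by
        rw [map_sub a z (πh z - C (πh z)), LinearMap.sub_apply, e1, e2, sub_zero]
      have hzero := ha_zero _ had
      simpa using (sub_eq_zero.mp hzero).symm
    · rintro ⟨vh, hvh, rfl⟩ w hw
      have := hC vh w hw
      simp [map_sub, this]
  refine ⟨h1, ?_⟩
  -- Riesz on Vh
  have hriesz : ∀ z : V, (∀ w : V, πh w = 0 → a z w = 0) →
      ∃ f ∈ Vh, ∀ v : V, a z v = b f v := by
    intro z hz
    set B : Vh →ₗ[ℝ] Module.Dual ℝ Vh :=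
      LinearMap.compl₂ (b.domRestrict Vh) Vh.subtype with hB
    have hBinj : Function.Injective B := by
      rw [injective_iff_map_eq_zero]
      intro f hf
      have : b (f : V) (f : V) = 0 := by
        have := congrFun (congrArg DFunLike.coe hf) f
        simpa [hB] using this
      have hfz : (f : V) = 0 := by
        by_contra h
        exact (ne_of_gt (hb_pos _ h)) this
      exact Subtype.ext hfz
    have hBsurj : Function.Surjective B :=
      (LinearMap.injective_iff_surjective_of_finrank_eq_finrank
        (Subspace.dual_finrank_eq).symm).mp hBinj
    obtain ⟨f, hf⟩ := hBsurj ((a z).domRestrict Vh)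
    refine ⟨(f : V), f.2, ?_⟩
    intro v
    have hπv : πh (v - πh v) = 0 := by
      simp [map_sub, hπ_id _ (hπ_mem v)]
    have e1 : a z (v - πh v) = 0 := hz _ hπv
    have e2 : a z (πh v) = b (f : V) (πh v) := by
      have := congrFun (congrArg DFunLike.coe hf) ⟨πh v, hπ_mem v⟩
      simpa [hB] using this.symm
    have e3 : b (f : V) (v - πh v) = 0 := by
      rw [hb_symm]; exact hπ_orth v _ f.2
    have d1 : a z v = a z (πh v) + a z (v - πh v) := by simp [map_sub]
    have d2 : b (f : V) v = b (f : V) (πh v) + b (f : V) (v - πh v) := by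
      simp [map_sub]
    rw [d1, d2, e1, e2, e3]
  rw [← h1]
  ext z
  constructor
  · intro hz
    exact hriesz z hz
  · rintro ⟨f, hf, hzf⟩ w hw
    rw [hzf w, hb_symm]
    have : b (w - πh w) f = 0 := hπ_orth w f hf
    simpa [hw] using this
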